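/- Maximizer perturbation controlled by the tangential component of the objective perturbation: In the constrained linear maximization setting, assume (Sm1), (Sm2), ‖φ − φ*‖_H ≤ 1/(3 L), and ‖P_G H^{−1/2} (w − w*)‖_2 ≤ 1/(12 L). Then ‖φ − φ*‖_H ≤ 4 ‖(I − P_G) H^{−1/2} (w − w*)‖_2. -/

import Mathlib

open Matrix

noncomputable section

namespace ConstrainedCurvature

variable (d m : ℕ)

/-- The gradient of `f : ℝ^d → ℝ` at `x`, as a vector. -/
def grad (f : (Fin d → ℝ) → ℝ) (x : Fin d → ℝ) : Fin d → ℝ :=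
  fun j => fderiv ℝ f x (Pi.single j 1)

/-- The Jacobian matrix `∇g(x) ∈ ℝ^{m×d}`, whose rows are the gradients `∇g_i(x)ᵀ`. -/
def gradMat (g : (Fin d → ℝ) → Fin m → ℝ) (x : Fin d → ℝ) :
    Matrix (Fin m) (Fin d) ℝ :=
  Matrix.of fun i j => grad d (fun y => g y i) x j

/-- The Hessian matrix `∇²f(x) ∈ ℝ^{d×d}`. -/
def hessMat (f : (Fin d → ℝ) → ℝ) (x : Fin d → ℝ) : Matrix (Fin d) (Fin d) ℝ :=
  Matrix.of fun j k => grad d (fun y => grad d f y k) x j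

/-- The local Hessian `H = ∑ᵢ λ*ᵢ ∇²gᵢ(φ*)`. -/
def Hmat (g : (Fin d → ℝ) → Fin m → ℝ) (xstar : Fin d → ℝ)
    (lamstar : Fin m → ℝ) : Matrix (Fin d) (Fin d) ℝ :=
  ∑ i, lamstar i • hessMat d (fun y => g y i) xstar

/-- The matrix `W = ∇g(φ*) H⁻¹ ∇g(φ*)ᵀ`. -/
def Wmat (g : (Fin d → ℝ) → Fin m → ℝ) (xstar : Fin d → ℝ)
    (lamstar : Fin m → ℝ) : Matrix (Fin m) (Fin m) ℝ :=
  gradMat d m g xstar * (Hmat d m g xstar lamstar)⁻¹ * (gradMat d m g xstar)ᵀ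

/-- The norm `‖x‖_M = (xᵀ M x)^{1/2}` induced by a (positive definite) matrix `M`. -/
def mnorm {k : ℕ} (M : Matrix (Fin k) (Fin k) ℝ) (x : Fin k → ℝ) : ℝ :=
  Real.sqrt (x ⬝ᵥ M.mulVec x)

/-- The Euclidean norm. -/
def enorm {k : ℕ} (x : Fin k → ℝ) : ℝ :=
  Real.sqrt (∑ j, x j ^ 2)

/-- The `ℓ₂` operator norm of a (possibly rectangular) matrix. -/
def opNorm {m' n' : ℕ} (M : Matrix (Fin m') (Fin n') ℝ) : ℝ :=
  sSup {t | ∃ x : Fin n' → ℝ, enorm x ≤ 1 ∧ t = enorm (M.mulVec x)}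

/-- The square root of a positive semidefinite matrix, as `Matrix.PosSemidef.sqrt` was defined
in the older Mathlib (removed since). -/
def psdSqrt {n 𝕜 : Type*} [Fintype n] [DecidableEq n] [RCLike 𝕜] [PartialOrder 𝕜] {A : Matrix n n 𝕜}
    (hA : A.PosSemidef) : Matrix n n 𝕜 :=
  hA.1.eigenvectorUnitary.1 * diagonal ((↑) ∘ (Real.sqrt ∘ hA.1.eigenvalues)) *
    (star hA.1.eigenvectorUnitary : Matrix n n 𝕜)

/-- The projection `P_G = H^{-1/2} ∇g(φ*)ᵀ W⁻¹ ∇g(φ*) H^{-1/2}` onto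
`G = span{H^{-1/2} ∇gᵢ(φ*)}`. -/
def PG (g : (Fin d → ℝ) → Fin m → ℝ) (xstar : Fin d → ℝ) (lamstar : Fin m → ℝ)
    (hH : (Hmat d m g xstar lamstar).PosSemidef) : Matrix (Fin d) (Fin d) ℝ :=
  (psdSqrt hH)⁻¹ * (gradMat d m g xstar)ᵀ * (Wmat d m g xstar lamstar)⁻¹ *
    gradMat d m g xstar * (psdSqrt hH)⁻¹

lemma psdSqrt_mul_self {n : Type*} [Fintype n] [DecidableEq n] {A : Matrix n n ℝ}
    (hA : A.PosSemidef) : psdSqrt hA * psdSqrt hA = A := by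
  have hCC : (star hA.1.eigenvectorUnitary : Matrix n n ℝ) *
      (hA.1.eigenvectorUnitary : Matrix n n ℝ) = 1 := by simp
  have key : ∀ (U V D : Matrix n n ℝ), V * U = 1 → U * D * V * (U * D * V) = U * (D * D) * V := by
    intro U V D h
    calc U * D * V * (U * D * V) = U * D * (V * U) * D * V := by simp only [Matrix.mul_assoc]
      _ = U * (D * D) * V := by rw [h, Matrix.mul_one]; simp only [Matrix.mul_assoc]
  unfold psdSqrt
  rw [key _ _ _ hCC, diagonal_mul_diagonal]
  have hs := hA.1.spectral_theorem
  rw [Unitary.conjStarAlgAut_apply] at hs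
  refine Eq.trans ?_ hs.symm
  congr 2
  ext i j
  simp [diagonal_apply, Real.mul_self_sqrt (hA.eigenvalues_nonneg _)]

lemma psdSqrt_isHermitian {n : Type*} [Fintype n] [DecidableEq n] {A : Matrix n n ℝ}
    (hA : A.PosSemidef) : (psdSqrt hA).IsHermitian := by
  unfold IsHermitian psdSqrt
  simp [conjTranspose_mul, Matrix.mul_assoc]
  rw [star_eq_conjTranspose, conjTranspose_eq_transpose_of_trivial, transpose_transpose]

/-! ### Euclidean norm toolkit -/

section Toolkit

variable {k k' : ℕ}

lemma enorm_nonneg (x : Fin k → ℝ) : 0 ≤ enorm x := Real.sqrt_nonneg _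

lemma dot_self_eq (x : Fin k → ℝ) : x ⬝ᵥ x = ∑ j, x j ^ 2 := by
  simp [dotProduct, sq]

lemma enorm_eq (x : Fin k → ℝ) : enorm x = Real.sqrt (x ⬝ᵥ x) := by
  rw [enorm, dot_self_eq]

lemma dot_self_nonneg (x : Fin k → ℝ) : 0 ≤ x ⬝ᵥ x := by
  rw [dot_self_eq]; positivity

lemma sq_enorm (x : Fin k → ℝ) : enorm x ^ 2 = x ⬝ᵥ x := by
  rw [enorm_eq, Real.sq_sqrt (dot_self_nonneg x)]

lemma enorm_eq_of_dot_eq {x : Fin k → ℝ} {y : Fin k' → ℝ}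
    (h : x ⬝ᵥ x = y ⬝ᵥ y) : enorm x = enorm y := by
  rw [enorm_eq, enorm_eq, h]

lemma enorm_eq_zero {x : Fin k → ℝ} (h : enorm x = 0) : x = 0 := by
  have h2 : x ⬝ᵥ x = 0 := by
    have := sq_enorm x; rw [h] at this; simpa using this.symm
  rw [dot_self_eq] at h2
  funext j
  have hj : x j ^ 2 = 0 := by
    have := Finset.sum_eq_zero_iff_of_nonneg (fun i _ => sq_nonneg (x i)) |>.mp h2 j
      (Finset.mem_univ j)
    exact this
  simpa using pow_eq_zero_iff (n := 2) (by norm_num) |>.mp hj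

lemma abs_dot_le (x y : Fin k → ℝ) : |x ⬝ᵥ y| ≤ enorm x * enorm y := by
  have h := Finset.sum_mul_sq_le_sq_mul_sq Finset.univ x y
  have hsq : (x ⬝ᵥ y) ^ 2 ≤ (enorm x * enorm y) ^ 2 := by
    rw [mul_pow, sq_enorm, sq_enorm, dot_self_eq, dot_self_eq]
    exact h
  have hnn : 0 ≤ enorm x * enorm y := mul_nonneg (enorm_nonneg x) (enorm_nonneg y)
  calc |x ⬝ᵥ y| = Real.sqrt ((x ⬝ᵥ y) ^ 2) := (Real.sqrt_sq_eq_abs _).symm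
    _ ≤ Real.sqrt ((enorm x * enorm y) ^ 2) := Real.sqrt_le_sqrt hsq
    _ = enorm x * enorm y := Real.sqrt_sq hnn

lemma dot_le_enorm_mul (x y : Fin k → ℝ) : x ⬝ᵥ y ≤ enorm x * enorm y :=
  le_trans (le_abs_self _) (abs_dot_le x y)

lemma neg_dot_le_enorm_mul (x y : Fin k → ℝ) : -(x ⬝ᵥ y) ≤ enorm x * enorm y :=
  le_trans (neg_le_abs _) (abs_dot_le x y)

lemma enorm_add_le (x y : Fin k → ℝ) : enorm (x + y) ≤ enorm x + enorm y := by
  have h1 : (x + y) ⬝ᵥ (x + y) ≤ (enorm x + enorm y) ^ 2 := by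
    have h2 := dot_le_enorm_mul x y
    have e1 : (x + y) ⬝ᵥ (x + y) = x ⬝ᵥ x + 2 * (x ⬝ᵥ y) + y ⬝ᵥ y := by
      simp [add_dotProduct, dotProduct_add, dotProduct_comm y x]; ring
    rw [e1, ← sq_enorm x, ← sq_enorm y]
    nlinarith [enorm_nonneg x, enorm_nonneg y]
  rw [enorm_eq]
  calc Real.sqrt ((x+y) ⬝ᵥ (x+y)) ≤ Real.sqrt ((enorm x + enorm y)^2) :=
        Real.sqrt_le_sqrt h1
    _ = enorm x + enorm y := Real.sqrt_sq (add_nonneg (enorm_nonneg x) (enorm_nonneg y))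

lemma enorm_smul (c : ℝ) (x : Fin k → ℝ) : enorm (c • x) = |c| * enorm x := by
  rw [enorm_eq, enorm_eq]
  have : (c • x) ⬝ᵥ (c • x) = c^2 * (x ⬝ᵥ x) := by
    simp [smul_dotProduct, dotProduct_smul, smul_eq_mul]; ring
  rw [this, Real.sqrt_mul (sq_nonneg c), Real.sqrt_sq_eq_abs]

lemma enorm_neg (x : Fin k → ℝ) : enorm (-x) = enorm x := by
  have := enorm_smul (-1 : ℝ) x; simpa using this

lemma enorm_sub_le (x y : Fin k → ℝ) : enorm (x - y) ≤ enorm x + enorm y := by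
  rw [sub_eq_add_neg]
  exact le_trans (enorm_add_le x (-y)) (by rw [enorm_neg])

lemma mnorm_eq_enorm_mulVec {M R : Matrix (Fin k) (Fin k) ℝ} (h : Rᵀ * R = M)
    (x : Fin k → ℝ) : mnorm M x = enorm (R.mulVec x) := by
  rw [mnorm, enorm_eq]
  congr 1
  rw [← h, ← mulVec_mulVec, dotProduct_mulVec, vecMul_transpose]

lemma dot_mulVec_symm {M : Matrix (Fin k) (Fin k) ℝ} (hsym : Mᵀ = M)
    (x y : Fin k → ℝ) : (M.mulVec x) ⬝ᵥ y = x ⬝ᵥ (M.mulVec y) := by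
  rw [dotProduct_mulVec, ← vecMul_transpose, hsym]

lemma dot_mulVec_mulVec {B : Matrix (Fin k') (Fin k) ℝ} (x y : Fin k → ℝ) :
    (B.mulVec x) ⬝ᵥ (B.mulVec y) = ((Bᵀ * B).mulVec x) ⬝ᵥ y := by
  rw [dotProduct_mulVec, ← Matrix.mulVec_transpose, mulVec_mulVec]

/-! ### Operator norm toolkit -/

lemma enorm_mulVec_le_frob (M : Matrix (Fin k') (Fin k) ℝ) {x : Fin k → ℝ}
    (hx : enorm x ≤ 1) :
    enorm (M.mulVec x) ≤ Real.sqrt (∑ i, ∑ j, M i j ^ 2) := by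
  have hx2 : ∑ j, x j ^ 2 ≤ 1 := by
    nlinarith [enorm_nonneg x, sq_enorm x, (dot_self_eq x).symm]
  have key : ∑ i, (M.mulVec x) i ^ 2 ≤ ∑ i, ∑ j, M i j ^ 2 := by
    apply Finset.sum_le_sum
    intro i _
    have hcs := Finset.sum_mul_sq_le_sq_mul_sq Finset.univ (fun j => M i j) x
    have he : (M.mulVec x) i = ∑ j, M i j * x j := rfl
    rw [he]
    calc (∑ j, M i j * x j) ^ 2 ≤ (∑ j, M i j ^ 2) * ∑ j, x j ^ 2 := hcs
      _ ≤ (∑ j, M i j ^ 2) * 1 := by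
          apply mul_le_mul_of_nonneg_left hx2
          positivity
      _ = ∑ j, M i j ^ 2 := mul_one _
  rw [enorm]
  exact Real.sqrt_le_sqrt key

lemma opNorm_bddAbove (M : Matrix (Fin k') (Fin k) ℝ) :
    BddAbove {t | ∃ x : Fin k → ℝ, enorm x ≤ 1 ∧ t = enorm (M.mulVec x)} := by
  refine ⟨Real.sqrt (∑ i, ∑ j, M i j ^ 2), ?_⟩
  rintro t ⟨x, hx, rfl⟩
  exact enorm_mulVec_le_frob M hx

lemma opNorm_nonneg (M : Matrix (Fin k') (Fin k) ℝ) : 0 ≤ opNorm M := by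
  have hmem : (enorm (M.mulVec (0 : Fin k → ℝ))) ∈
      {t | ∃ x : Fin k → ℝ, enorm x ≤ 1 ∧ t = enorm (M.mulVec x)} := by
    refine ⟨0, ?_, rfl⟩
    have h0 : enorm (0 : Fin k → ℝ) = 0 := by
      have := enorm_smul (0:ℝ) (0 : Fin k → ℝ); simpa using this
    simp [h0]
  exact le_trans (enorm_nonneg _) (le_csSup (opNorm_bddAbove M) hmem)

lemma enorm_mulVec_le (M : Matrix (Fin k') (Fin k) ℝ) (x : Fin k → ℝ) :
    enorm (M.mulVec x) ≤ opNorm M * enorm x := by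
  rcases eq_or_lt_of_le (enorm_nonneg x) with h0 | hpos
  · have hx0 : x = 0 := enorm_eq_zero h0.symm
    subst hx0
    have hM0 : M.mulVec 0 = 0 := Matrix.mulVec_zero M
    rw [hM0, ← h0, mul_zero]
    have h0' : enorm (0 : Fin k' → ℝ) = 0 := by
      have := enorm_smul (0:ℝ) (0 : Fin k' → ℝ); simpa using this
    simp [h0']
  · set c := enorm x with hc
    have hy : enorm (c⁻¹ • x) = 1 := by
      rw [enorm_smul, abs_of_pos (inv_pos.mpr hpos)]
      field_simp
      exact hc.symm
    have hmem : enorm (M.mulVec (c⁻¹ • x)) ∈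
        {t | ∃ y : Fin k → ℝ, enorm y ≤ 1 ∧ t = enorm (M.mulVec y)} :=
      ⟨c⁻¹ • x, le_of_eq hy, rfl⟩
    have hle : enorm (M.mulVec (c⁻¹ • x)) ≤ opNorm M := le_csSup (opNorm_bddAbove M) hmem
    have hsm : M.mulVec (c⁻¹ • x) = c⁻¹ • M.mulVec x := by
      rw [Matrix.mulVec_smul]
    rw [hsm, enorm_smul, abs_of_pos (inv_pos.mpr hpos)] at hle
    calc enorm (M.mulVec x) = c * (c⁻¹ * enorm (M.mulVec x)) := by field_simp
      _ ≤ c * opNorm M := mul_le_mul_of_nonneg_left hle (le_of_lt hpos)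
      _ = opNorm M * c := mul_comm _ _

lemma enorm_transpose_mulVec_le {M : Matrix (Fin k') (Fin k) ℝ} {a : ℝ}
    (ha : opNorm M ≤ a) (y : Fin k' → ℝ) :
    enorm (Mᵀ.mulVec y) ≤ a * enorm y := by
  have ha0 : 0 ≤ a := le_trans (opNorm_nonneg M) ha
  set z := Mᵀ.mulVec y with hz
  have key : enorm z ^ 2 ≤ enorm y * (a * enorm z) := by
    have e1 : z ⬝ᵥ z = y ⬝ᵥ M.mulVec z := by
      rw [hz, mulVec_transpose, ← dotProduct_mulVec]
    calc enorm z ^ 2 = z ⬝ᵥ z := sq_enorm z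
      _ = y ⬝ᵥ M.mulVec z := e1
      _ ≤ enorm y * enorm (M.mulVec z) := dot_le_enorm_mul _ _
      _ ≤ enorm y * (a * enorm z) := by
          apply mul_le_mul_of_nonneg_left _ (enorm_nonneg y)
          exact le_trans (enorm_mulVec_le M z)
            (mul_le_mul_of_nonneg_right ha (enorm_nonneg z))
  rcases eq_or_lt_of_le (enorm_nonneg z) with h0 | hpos
  · rw [← h0]; exact mul_nonneg ha0 (enorm_nonneg y)
  · nlinarith [key, hpos]

lemma enorm_proj_le {P : Matrix (Fin k) (Fin k) ℝ} (hsym : Pᵀ = P)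
    (hidem : P * P = P) (z : Fin k → ℝ) : enorm (P.mulVec z) ≤ enorm z := by
  have key : enorm (P.mulVec z) ^ 2 ≤ enorm z * enorm (P.mulVec z) := by
    calc enorm (P.mulVec z) ^ 2 = (P.mulVec z) ⬝ᵥ (P.mulVec z) := sq_enorm _
      _ = z ⬝ᵥ (P.mulVec (P.mulVec z)) := dot_mulVec_symm hsym z (P.mulVec z)
      _ = z ⬝ᵥ (P.mulVec z) := by rw [mulVec_mulVec, hidem]
      _ ≤ enorm z * enorm (P.mulVec z) := dot_le_enorm_mul _ _
  rcases eq_or_lt_of_le (enorm_nonneg (P.mulVec z)) with h0 | hpos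
  · rw [← h0]; exact enorm_nonneg z
  · nlinarith [key, hpos]

lemma isHermitian_real_transpose {A : Matrix (Fin k) (Fin k) ℝ}
    (h : A.IsHermitian) : Aᵀ = A := by
  have e : Aᴴ = Aᵀ := by
    ext i j; simp [Matrix.conjTranspose_apply]
  rw [← e]; exact h

lemma sum_single_eq {k : ℕ} (y : Fin k → ℝ) :
    ∑ j, y j • (Pi.single j 1 : Fin k → ℝ) = y := by
  funext a
  rw [Finset.sum_apply]
  have h : ∀ j, (y j • (Pi.single j 1 : Fin k → ℝ)) a = if a = j then y j else 0 := by
    intro j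
    by_cases h : a = j
    · subst h; simp
    · simp [Pi.single_apply, h]
  simp only [h]
  simp

lemma grad_dot {k : ℕ} (f : (Fin k → ℝ) → ℝ) (x y : Fin k → ℝ) :
    grad k f x ⬝ᵥ y = fderiv ℝ f x y := by
  conv_rhs => rw [← sum_single_eq y]
  rw [map_sum]
  simp only [_root_.map_smul, smul_eq_mul]
  simp [dotProduct, grad, mul_comm]

lemma enorm_eq_norm {x : Fin k → ℝ} :
    enorm x = ‖(WithLp.equiv 2 (Fin k → ℝ)).symm x‖ := by
  have h : ∑ j, x j ^ 2 = ∑ j, ‖(WithLp.equiv 2 (Fin k → ℝ)).symm x j‖ ^ 2 := by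
    refine Finset.sum_congr rfl fun j _ => ?_
    rw [show (WithLp.equiv 2 (Fin k → ℝ)).symm x j = x j from rfl, Real.norm_eq_abs, sq_abs]
  rw [enorm, h, EuclideanSpace.norm_eq]

end Toolkit

/-! ### The integral (second-order boundary) bound -/

open intervalIntegral in
lemma sbound (d m : ℕ) (g : (Fin d → ℝ) → Fin m → ℝ) (xstar dvec : Fin d → ℝ)
    (N : Matrix (Fin m) (Fin m) ℝ) (L r : ℝ)
    (hg : ContDiff ℝ 2 g)
    (h0 : ∀ i, g xstar i = 0) (h1 : ∀ i, g (xstar + dvec) i = 0)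
    (hFb : ∀ τ ∈ Set.Icc (0:ℝ) 1,
      enorm (N.mulVec ((gradMat d m g (xstar + τ • dvec) - gradMat d m g xstar).mulVec dvec))
        ≤ L * τ * r ^ 2) :
    enorm (N.mulVec ((gradMat d m g xstar).mulVec dvec)) ≤ L * r ^ 2 / 2 := by
  classical
  set line : ℝ → (Fin d → ℝ) := fun τ => xstar + τ • dvec with hline_def
  have hline_cont : Continuous line := by
    apply Continuous.add continuous_const
    exact continuous_id.smul continuous_const
  have hgi : ∀ i, ContDiff ℝ 2 (fun y => g y i) := fun i => (contDiff_pi.mp hg) i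
  have hfd_cont : ∀ i, Continuous fun x => fderiv ℝ (fun y => g y i) x := fun i =>
    (hgi i).continuous_fderiv two_ne_zero
  have hentry_cont : ∀ i (y : Fin d → ℝ),
      Continuous fun τ => fderiv ℝ (fun z => g z i) (line τ) y := by
    intro i y
    exact ((hfd_cont i).comp hline_cont).clm_apply continuous_const
  set G := gradMat d m g xstar with hG
  set ψ : ℝ → Fin m → ℝ := fun τ => (gradMat d m g (line τ) - G).mulVec dvec with hψ
  have hψ_eq : ∀ τ i, ψ τ i = fderiv ℝ (fun z => g z i) (line τ) dvec
      - fderiv ℝ (fun z => g z i) xstar dvec := by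
    intro τ i
    have e1 : ∀ (x : Fin d → ℝ), (gradMat d m g x).mulVec dvec i
        = fderiv ℝ (fun z => g z i) x dvec := by
      intro x
      have e : (gradMat d m g x).mulVec dvec i = grad d (fun y => g y i) x ⬝ᵥ dvec := rfl
      rw [e, grad_dot]
    have e2 : ψ τ i = (gradMat d m g (line τ)).mulVec dvec i - G.mulVec dvec i := by
      simp [hψ, Matrix.sub_mulVec]
    rw [e2, e1, hG, e1]
  have hψi_cont : ∀ i, Continuous fun τ => ψ τ i := by
    intro i
    simp only [hψ_eq]
    exact (hentry_cont i dvec).sub continuous_const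
  have hftc : ∀ i, ∫ τ in (0:ℝ)..1, fderiv ℝ (fun z => g z i) (line τ) dvec
      = (0:ℝ) := by
    intro i
    have hderiv : ∀ τ ∈ Set.uIcc (0:ℝ) 1,
        HasDerivAt (fun s => g (line s) i) (fderiv ℝ (fun z => g z i) (line τ) dvec) τ := by
      intro τ _
      have hl : HasDerivAt line dvec τ := by
        have := ((hasDerivAt_id τ).smul_const dvec).const_add xstar
        rw [one_smul] at this
        exact this
      have hf : HasFDerivAt (fun z => g z i) (fderiv ℝ (fun z => g z i) (line τ)) (line τ) :=
        (((hgi i).differentiable two_ne_zero) (line τ)).hasFDerivAt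
      exact hf.comp_hasDerivAt τ hl
    have hint : IntervalIntegrable
        (fun τ => fderiv ℝ (fun z => g z i) (line τ) dvec) MeasureTheory.volume 0 1 :=
      (hentry_cont i dvec).intervalIntegrable _ _
    have hval := integral_eq_sub_of_hasDerivAt hderiv hint
    rw [hval]
    have l1 : line 1 = xstar + dvec := by simp [hline_def]
    have l0 : line 0 = xstar := by simp [hline_def]
    rw [l1, l0, h1 i, h0 i, sub_zero]
  have hv : ∀ i, (G.mulVec dvec) i = -∫ τ in (0:ℝ)..1, ψ τ i := by
    intro i
    have hsub : ∫ τ in (0:ℝ)..1, ψ τ i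
        = (∫ τ in (0:ℝ)..1, fderiv ℝ (fun z => g z i) (line τ) dvec)
          - ∫ τ in (0:ℝ)..1, (fderiv ℝ (fun z => g z i) xstar dvec : ℝ) := by
      rw [← integral_sub]
      · apply integral_congr
        intro τ _
        exact hψ_eq τ i
      · exact (hentry_cont i dvec).intervalIntegrable _ _
      · exact intervalIntegrable_const
    rw [hsub, hftc i, integral_const]
    have e : (G.mulVec dvec) i = fderiv ℝ (fun z => g z i) xstar dvec := by
      have e' : (gradMat d m g xstar).mulVec dvec i = grad d (fun y => g y i) xstar ⬝ᵥ dvec := rfl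
      rw [hG, e', grad_dot]
    rw [e]
    ring_nf
  have hNv : ∀ i, (N.mulVec (G.mulVec dvec)) i
      = ∫ τ in (0:ℝ)..1, (-(N.mulVec (ψ τ)) i) := by
    intro i
    have e1 : (N.mulVec (G.mulVec dvec)) i = ∑ k, N i k * (G.mulVec dvec) k := rfl
    rw [e1]
    have e2 : ∀ k : Fin m, N i k * (G.mulVec dvec) k
        = ∫ τ in (0:ℝ)..1, (-(N i k * ψ τ k)) := by
      intro k
      rw [hv k, mul_neg, ← integral_const_mul, ← integral_neg]
    calc (∑ k, N i k * (G.mulVec dvec) k)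
        = ∑ k, ∫ τ in (0:ℝ)..1, (-(N i k * ψ τ k)) :=
          Finset.sum_congr rfl fun k _ => e2 k
      _ = ∫ τ in (0:ℝ)..1, ∑ k, (-(N i k * ψ τ k)) := by
          rw [integral_finset_sum]
          intro k _
          exact (((continuous_const.mul (hψi_cont k)).neg).intervalIntegrable _ _)
      _ = ∫ τ in (0:ℝ)..1, (-(N.mulVec (ψ τ)) i) := by
          apply integral_congr
          intro τ _
          simp [Matrix.mulVec, dotProduct]
  set base : ℝ → (Fin m → ℝ) := fun τ => -(N.mulVec (ψ τ)) with hbase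
  have hbase_cont : Continuous base := by
    apply Continuous.neg
    apply continuous_pi
    intro i
    have e : (fun τ => (N.mulVec (ψ τ)) i) = fun τ => ∑ k, N i k * ψ τ k := rfl
    rw [e]
    exact continuous_finset_sum _ fun k _ => continuous_const.mul (hψi_cont k)
  set ce := (PiLp.continuousLinearEquiv 2 ℝ (fun _ : Fin m => ℝ)).symm with hce
  set Φ : ℝ → EuclideanSpace ℝ (Fin m) := fun τ => ce (base τ) with hΦ
  have hΦ_cont : Continuous Φ := ce.continuous.comp hbase_cont
  have hbase_int : IntervalIntegrable base MeasureTheory.volume 0 1 :=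
    hbase_cont.intervalIntegrable _ _
  have hcomm : (∫ τ in (0:ℝ)..1, Φ τ) = ce (∫ τ in (0:ℝ)..1, base τ) := by
    rw [hΦ]
    exact ContinuousLinearMap.intervalIntegral_comp_comm ce.toContinuousLinearMap hbase_int
  have hbase_val : (∫ τ in (0:ℝ)..1, base τ) = N.mulVec (G.mulVec dvec) := by
    funext i
    have hproj := ContinuousLinearMap.intervalIntegral_comp_comm
      (ContinuousLinearMap.proj (R := ℝ) (φ := fun _ : Fin m => ℝ) i) hbase_int
    have e : (∫ τ in (0:ℝ)..1, base τ i) = (∫ τ in (0:ℝ)..1, base τ) i := by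
      simpa using hproj
    rw [← e, hNv i]
    rfl
  have hnorm_eq : enorm (N.mulVec (G.mulVec dvec)) = ‖∫ τ in (0:ℝ)..1, Φ τ‖ := by
    rw [hcomm, hbase_val]
    rw [enorm_eq_norm]
    rfl
  rw [hnorm_eq]
  have hb1 : ‖∫ τ in (0:ℝ)..1, Φ τ‖ ≤ ∫ τ in (0:ℝ)..1, ‖Φ τ‖ :=
    norm_integral_le_integral_norm zero_le_one
  have hb2 : ∫ τ in (0:ℝ)..1, ‖Φ τ‖ ≤ ∫ τ in (0:ℝ)..1, L * τ * r ^ 2 := by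
    have hpt : ∀ τ ∈ Set.Icc (0:ℝ) 1, ‖Φ τ‖ ≤ L * τ * r ^ 2 := by
      intro τ hτ
      have he : ‖Φ τ‖ = enorm (base τ) := by rw [enorm_eq_norm]; rfl
      rw [he, hbase, enorm_neg]
      exact hFb τ hτ
    exact intervalIntegral.integral_mono_on (zero_le_one)
      ((hΦ_cont.norm).intervalIntegrable _ _)
      (((continuous_const.mul continuous_id).mul continuous_const).intervalIntegrable _ _) hpt
  have hb3 : (∫ τ in (0:ℝ)..1, L * τ * r ^ 2) = L * r ^ 2 / 2 := by
    have e : (fun τ => L * τ * r ^ 2) = fun τ : ℝ => (L * r ^ 2) * τ := by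
      funext τ; ring
    rw [e, integral_const_mul, integral_id]
    ring
  linarith

set_option maxHeartbeats 1000000 in
/-- maximizer perturbation controlled by the tangential component of the objective perturbation. -/
theorem maximizer_perturbation (d m : ℕ)
    (hd : 1 ≤ d) (hm : 1 ≤ m) (hmd : m ≤ d)
    (g : (Fin d → ℝ) → Fin m → ℝ) (hg : ContDiff ℝ 2 g)
    (hconv : ∀ i, ConvexOn ℝ Set.univ fun x => g x i)
    (wstar wv xstar xv : Fin d → ℝ)
    (hxstarAct : ∀ i, g xstar i = 0) (hxvAct : ∀ i, g xv i = 0)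
    (hxstarMax : ∀ x : Fin d → ℝ, (∀ i, g x i ≤ 0) → x ⬝ᵥ wstar ≤ xstar ⬝ᵥ wstar)
    (hxvMax : ∀ x : Fin d → ℝ, (∀ i, g x i ≤ 0) → x ⬝ᵥ wv ≤ xv ⬝ᵥ wv)
    (lamstar lamv : Fin m → ℝ)
    (hlamstar : ∀ i, 0 ≤ lamstar i) (hlamv : ∀ i, 0 ≤ lamv i)
    (hKKTstar : wstar = (gradMat d m g xstar)ᵀ.mulVec lamstar)
    (hKKTv : wv = (gradMat d m g xv)ᵀ.mulVec lamv)
    (hH : (Hmat d m g xstar lamstar).PosDef)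
    (hW : (Wmat d m g xstar lamstar).PosDef)
    (L : ℝ) (hL : 0 < L)
    -- smoothness condition (Sm1)
    (hSm1 : mnorm (Hmat d m g xstar lamstar)⁻¹
        ((gradMat d m g xv - gradMat d m g xstar)ᵀ.mulVec lamstar -
          (Hmat d m g xstar lamstar).mulVec (xv - xstar)) ≤
      1 / 4 * mnorm (Hmat d m g xstar lamstar) (xv - xstar))
    -- smoothness condition (Sm2)
    (hSm2 : ∀ x : Fin d → ℝ,
      opNorm ((psdSqrt hW.posSemidef)⁻¹ * (gradMat d m g x - gradMat d m g xstar) *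
          (psdSqrt hH.posSemidef)⁻¹) ≤
        L * mnorm (Hmat d m g xstar lamstar) (x - xstar))
    (hxclose : mnorm (Hmat d m g xstar lamstar) (xv - xstar) ≤ 1 / (3 * L))
    (hwclose : enorm ((PG d m g xstar lamstar hH.posSemidef).mulVec
        ((psdSqrt hH.posSemidef)⁻¹.mulVec (wv - wstar))) ≤ 1 / (12 * L)) :
    mnorm (Hmat d m g xstar lamstar) (xv - xstar) ≤
      4 * enorm (((1 : Matrix (Fin d) (Fin d) ℝ) -
          PG d m g xstar lamstar hH.posSemidef).mulVec
        ((psdSqrt hH.posSemidef)⁻¹.mulVec (wv - wstar))) := by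
  classical
  -- matrix abbreviations
  set HM := Hmat d m g xstar lamstar with hHMdef
  set WM := Wmat d m g xstar lamstar with hWMdef
  set GM := gradMat d m g xstar with hGMdef
  set G2 := gradMat d m g xv with hG2def
  set S := psdSqrt hH.posSemidef with hSdef
  set T := psdSqrt hW.posSemidef with hTdef
  set P := PG d m g xstar lamstar hH.posSemidef with hPdef
  set Si := S⁻¹ with hSidef
  set N := T⁻¹ with hNdef
  -- basic square-root facts for H
  have hSS : S * S = HM := psdSqrt_mul_self hH.posSemidef
  have hSsym : Sᵀ = S := isHermitian_real_transpose (psdSqrt_isHermitian hH.posSemidef)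
  have hHunit : IsUnit HM.det := (Matrix.isUnit_iff_isUnit_det HM).mp hH.isUnit
  have hSunit : IsUnit S.det := by
    have hdet : S.det * S.det = HM.det := by rw [← Matrix.det_mul, hSS]
    exact isUnit_of_mul_isUnit_left (hdet ▸ hHunit)
  have hSiS : Si * S = 1 := Matrix.nonsing_inv_mul S hSunit
  have hSSi : S * Si = 1 := Matrix.mul_nonsing_inv S hSunit
  have hSisym : Siᵀ = Si := by
    rw [hSidef, Matrix.transpose_nonsing_inv, hSsym]
  have hHinv : HM⁻¹ = Si * Si := by
    rw [← hSS, Matrix.mul_inv_rev, hSidef]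
  -- basic square-root facts for W
  have hTT : T * T = WM := psdSqrt_mul_self hW.posSemidef
  have hTsym : Tᵀ = T := isHermitian_real_transpose (psdSqrt_isHermitian hW.posSemidef)
  have hWunit : IsUnit WM.det := (Matrix.isUnit_iff_isUnit_det WM).mp hW.isUnit
  have hTunit : IsUnit T.det := by
    have hdet : T.det * T.det = WM.det := by rw [← Matrix.det_mul, hTT]
    exact isUnit_of_mul_isUnit_left (hdet ▸ hWunit)
  have hNT : N * T = 1 := Matrix.nonsing_inv_mul T hTunit
  have hTN : T * N = 1 := Matrix.mul_nonsing_inv T hTunit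
  have hNsym : Nᵀ = N := by
    rw [hNdef, Matrix.transpose_nonsing_inv, hTsym]
  have hWinv : WM⁻¹ = N * N := by
    rw [← hTT, Matrix.mul_inv_rev, hNdef]
  have hWsym : WMᵀ = WM := isHermitian_real_transpose hW.posSemidef.1
  have hWisym : (WM⁻¹)ᵀ = WM⁻¹ := by
    rw [Matrix.transpose_nonsing_inv, hWsym]
  have hWWi : WM * WM⁻¹ = 1 := Matrix.mul_nonsing_inv WM hWunit
  have hWiW : WM⁻¹ * WM = 1 := Matrix.nonsing_inv_mul WM hWunit
  have hWM : WM = GM * HM⁻¹ * GMᵀ := by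
    rw [hWMdef, hGMdef, hHMdef]; rfl
  -- the matrix B and projection facts
  set B := Si * GMᵀ with hBdef
  have hBt : Bᵀ = GM * Si := by
    rw [hBdef, Matrix.transpose_mul, hSisym, Matrix.transpose_transpose]
  have hBtB : Bᵀ * B = WM := by
    rw [hBt, hBdef, hWM, hHinv]
    simp only [Matrix.mul_assoc]
  have hP : P = B * (WM⁻¹ * Bᵀ) := by
    rw [hPdef, hBt, hBdef]
    show Si * GM.transpose * WM⁻¹ * GM * Si = _
    simp only [Matrix.mul_assoc]
  have hPsym : Pᵀ = P := by
    rw [hP]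
    simp only [Matrix.transpose_mul, Matrix.transpose_transpose, hBt, hWisym, hSisym]
    rw [hBdef]
    simp only [Matrix.mul_assoc]
  have hPP : P * P = P := by
    calc P * P = B * (WM⁻¹ * (Bᵀ * (B * (WM⁻¹ * Bᵀ)))) := by
          rw [hP]; simp only [Matrix.mul_assoc]
      _ = B * (WM⁻¹ * ((Bᵀ * B) * (WM⁻¹ * Bᵀ))) := by
          simp only [Matrix.mul_assoc]
      _ = B * (WM⁻¹ * (WM * (WM⁻¹ * Bᵀ))) := by rw [hBtB]
      _ = B * (WM⁻¹ * ((WM * WM⁻¹) * Bᵀ)) := by simp only [Matrix.mul_assoc]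
      _ = B * (WM⁻¹ * Bᵀ) := by rw [hWWi, Matrix.one_mul]
      _ = P := hP.symm
  have hPBmat : P * B = B := by
    calc P * B = B * (WM⁻¹ * (Bᵀ * B)) := by rw [hP]; simp only [Matrix.mul_assoc]
      _ = B * (WM⁻¹ * WM) := by rw [hBtB]
      _ = B := by rw [hWiW, Matrix.mul_one]
  -- vector abbreviations
  set dv := xv - xstar with hdvdef
  set uu := S.mulVec dv with huudef
  set dlt := Si.mulVec (wv - wstar) with hdltdef
  set mu := lamv - lamstar with hmudef
  set eps := Si.mulVec ((G2 - GM)ᵀ.mulVec lamstar) - uu with hepsdef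
  set alf := (Si * (G2 - GM)ᵀ).mulVec mu with halfdef
  set bet := B.mulVec mu with hbetdef
  set r := enorm uu with hrdef
  set s := enorm (P.mulVec uu) with hsdef
  set tt := enorm bet with httdef
  set pp := enorm (P.mulVec dlt) with hppdef
  set qq := enorm ((1 - P).mulVec dlt) with hqqdef
  -- `r` is the H-norm of the displacement
  have hrm : mnorm HM dv = r := by
    rw [hrdef, huudef]
    exact mnorm_eq_enorm_mulVec (by rw [hSsym, hSS]) dv
  have hr0 : 0 ≤ r := enorm_nonneg uu
  have hs0 : 0 ≤ s := enorm_nonneg _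
  have ht0 : 0 ≤ tt := enorm_nonneg _
  have hp0 : 0 ≤ pp := enorm_nonneg _
  have hq0 : 0 ≤ qq := enorm_nonneg _
  -- Sm1 gives a bound on eps
  have hEps : enorm eps ≤ r / 4 := by
    have h1 : mnorm HM⁻¹ ((G2 - GM)ᵀ.mulVec lamstar - HM.mulVec dv)
        = enorm (Si.mulVec ((G2 - GM)ᵀ.mulVec lamstar - HM.mulVec dv)) :=
      mnorm_eq_enorm_mulVec (by rw [hSisym, hHinv]) _
    have h2 : Si.mulVec ((G2 - GM)ᵀ.mulVec lamstar - HM.mulVec dv) = eps := by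
      rw [Matrix.mulVec_sub, hepsdef]
      congr 1
      rw [mulVec_mulVec, ← hSS, ← Matrix.mul_assoc, hSiS, Matrix.one_mul, huudef]
    have h3 := hSm1
    rw [h1, h2, hrm] at h3
    linarith
  -- the key identity
  have hid : dlt = uu + eps + alf + bet := by
    have hlam : lamv = lamstar + mu := by rw [hmudef]; abel
    have hwsub : wv - wstar
        = (G2 - GM)ᵀ.mulVec lamstar + ((G2 - GM)ᵀ.mulVec mu + GMᵀ.mulVec mu) := by
      rw [hKKTv, hKKTstar, hlam]
      simp only [Matrix.transpose_sub, Matrix.sub_mulVec, Matrix.mulVec_add]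
      abel
    rw [hdltdef, hwsub, Matrix.mulVec_add, Matrix.mulVec_add]
    have e1 : Si.mulVec ((G2 - GM)ᵀ.mulVec lamstar) = uu + eps := by
      rw [hepsdef]; abel
    have e2 : Si.mulVec ((G2 - GM)ᵀ.mulVec mu) = alf := by
      rw [halfdef, mulVec_mulVec]
    have e3 : Si.mulVec (GMᵀ.mulVec mu) = bet := by
      rw [hbetdef, hBdef, mulVec_mulVec]
    rw [e1, e2, e3]
    abel
  -- P applied to bet gives bet
  have hPbet : P.mulVec bet = bet := by
    rw [hbetdef, mulVec_mulVec, hPBmat]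
  -- bound on alf
  have hLr0 : 0 ≤ L * r := mul_nonneg (le_of_lt hL) hr0
  have hAlf : enorm alf ≤ (L * r) * tt := by
    -- alf = Mxᵀ *ᵥ (T *ᵥ mu) where Mx = N * (G2 - GM) * Si
    have hop : opNorm (N * (G2 - GM) * Si) ≤ L * r := by
      have := hSm2 xv
      rwa [← hdvdef, hrm] at this
    have hMt : (N * (G2 - GM) * Si)ᵀ * T = Si * (G2 - GM)ᵀ := by
      simp only [Matrix.transpose_mul, hNsym, hSisym]
      rw [Matrix.mul_assoc, Matrix.mul_assoc, hNT, Matrix.mul_one]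
    have half2 : alf = ((N * (G2 - GM) * Si)ᵀ).mulVec (T.mulVec mu) := by
      rw [halfdef, mulVec_mulVec, hMt]
    have hTmu : enorm (T.mulVec mu) = tt := by
      rw [httdef]
      apply enorm_eq_of_dot_eq
      rw [dot_mulVec_mulVec, dot_mulVec_mulVec, hTsym, hTT, hBtB]
    rw [half2, ← hTmu]
    exact enorm_transpose_mulVec_le hop (T.mulVec mu)
  -- bound on tt
  have hT : tt ≤ pp + s + r / 4 + (L * r) * tt := by
    have hbet2 : bet = P.mulVec dlt - P.mulVec uu - P.mulVec eps - P.mulVec alf := by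
      rw [hid, Matrix.mulVec_add, Matrix.mulVec_add, Matrix.mulVec_add, hPbet]
      abel
    have hb : tt ≤ pp + s + enorm (P.mulVec eps) + enorm (P.mulVec alf) := by
      rw [httdef, hbet2]
      calc enorm (P.mulVec dlt - P.mulVec uu - P.mulVec eps - P.mulVec alf)
          ≤ enorm (P.mulVec dlt - P.mulVec uu - P.mulVec eps) + enorm (P.mulVec alf) :=
            enorm_sub_le _ _
        _ ≤ enorm (P.mulVec dlt - P.mulVec uu) + enorm (P.mulVec eps)
              + enorm (P.mulVec alf) := by
            have := enorm_sub_le (P.mulVec dlt - P.mulVec uu) (P.mulVec eps)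
            linarith
        _ ≤ pp + s + enorm (P.mulVec eps) + enorm (P.mulVec alf) := by
            have := enorm_sub_le (P.mulVec dlt) (P.mulVec uu)
            rw [hppdef, hsdef]
            linarith
    have hpe : enorm (P.mulVec eps) ≤ r / 4 :=
      le_trans (enorm_proj_le hPsym hPP eps) hEps
    have hpa : enorm (P.mulVec alf) ≤ (L * r) * tt :=
      le_trans (enorm_proj_le hPsym hPP alf) hAlf
    linarith
  -- bound on s via the integral lemma
  have hS : s ≤ L * r ^ 2 / 2 := by
    have hmat : B * (WM⁻¹ * Bᵀ) * S = B * WM⁻¹ * GM := by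
      rw [hBt]
      simp only [Matrix.mul_assoc]
      rw [hSiS, Matrix.mul_one]
    have hPu : P.mulVec uu = (B * WM⁻¹).mulVec (GM.mulVec dv) := by
      calc P.mulVec uu = (B * (WM⁻¹ * Bᵀ)).mulVec (S.mulVec dv) := by rw [hP, huudef]
        _ = ((B * (WM⁻¹ * Bᵀ)) * S).mulVec dv := mulVec_mulVec dv _ S
        _ = (B * WM⁻¹ * GM).mulVec dv := by rw [hmat]
        _ = (B * WM⁻¹).mulVec (GM.mulVec dv) := (mulVec_mulVec dv (B * WM⁻¹) GM).symm
    have hsquares : (P.mulVec uu) ⬝ᵥ (P.mulVec uu)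
        = (N.mulVec (GM.mulVec dv)) ⬝ᵥ (N.mulVec (GM.mulVec dv)) := by
      rw [hPu, dot_mulVec_mulVec, dot_mulVec_mulVec]
      have e1 : (B * WM⁻¹)ᵀ * (B * WM⁻¹) = WM⁻¹ * (WM * WM⁻¹) := by
        rw [Matrix.transpose_mul, hWisym, Matrix.mul_assoc, ← Matrix.mul_assoc Bᵀ B, hBtB]
      have e2 : Nᵀ * N = WM⁻¹ := by rw [hNsym, hWinv]
      rw [e1, hWWi, Matrix.mul_one, e2]
    have hsN : s = enorm (N.mulVec (GM.mulVec dv)) := by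
      rw [hsdef]
      exact enorm_eq_of_dot_eq hsquares
    -- apply the integral bound
    have hxv : xstar + dv = xv := by rw [hdvdef]; abel
    have hFb : ∀ τ ∈ Set.Icc (0:ℝ) 1,
        enorm (N.mulVec ((gradMat d m g (xstar + τ • dv) - gradMat d m g xstar).mulVec dv))
          ≤ L * τ * r ^ 2 := by
      intro τ hτ
      obtain ⟨hτ0, hτ1⟩ := hτ
      have hop : opNorm (N * (gradMat d m g (xstar + τ • dv) - GM) * Si)
          ≤ L * (τ * r) := by
        have h2 := hSm2 (xstar + τ • dv)
        have e : xstar + τ • dv - xstar = τ • dv := by abel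
        rw [e] at h2
        have e2 : mnorm HM (τ • dv) = τ * r := by
          rw [mnorm_eq_enorm_mulVec (by rw [hSsym, hSS]) (τ • dv), Matrix.mulVec_smul,
            enorm_smul, abs_of_nonneg hτ0, ← huudef, ← hrdef]
        rwa [e2] at h2
      have hvec : N.mulVec ((gradMat d m g (xstar + τ • dv) - gradMat d m g xstar).mulVec dv)
          = (N * (gradMat d m g (xstar + τ • dv) - GM) * Si).mulVec uu := by
        have hm2 : N * (gradMat d m g (xstar + τ • dv) - GM) * Si * S
            = N * (gradMat d m g (xstar + τ • dv) - GM) := by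
          simp only [Matrix.mul_assoc]
          rw [hSiS, Matrix.mul_one]
        calc N.mulVec ((gradMat d m g (xstar + τ • dv) - gradMat d m g xstar).mulVec dv)
            = (N * (gradMat d m g (xstar + τ • dv) - GM)).mulVec dv := by
              rw [hGMdef]; exact mulVec_mulVec dv N _
          _ = (N * (gradMat d m g (xstar + τ • dv) - GM) * Si * S).mulVec dv := by rw [hm2]
          _ = (N * (gradMat d m g (xstar + τ • dv) - GM) * Si).mulVec (S.mulVec dv) :=
              (mulVec_mulVec dv _ S).symm
          _ = (N * (gradMat d m g (xstar + τ • dv) - GM) * Si).mulVec uu := by rw [← huudef]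
      rw [hvec]
      calc enorm ((N * (gradMat d m g (xstar + τ • dv) - GM) * Si).mulVec uu)
          ≤ opNorm (N * (gradMat d m g (xstar + τ • dv) - GM) * Si) * enorm uu :=
            enorm_mulVec_le _ _
        _ ≤ (L * (τ * r)) * r := by
            apply mul_le_mul_of_nonneg_right hop (enorm_nonneg uu)
        _ = L * τ * r ^ 2 := by ring
    have hsb := sbound d m g xstar dv N L r hg hxstarAct (by rw [hxv]; exact hxvAct) hFb
    rw [hsN, hGMdef]
    exact hsb
  -- main inequality
  have hqsplit : (1 - P).mulVec dlt = dlt - P.mulVec dlt := by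
    rw [Matrix.sub_mulVec, Matrix.one_mulVec]
  have hMAIN : r ^ 2 ≤ r * qq + s ^ 2 + s * (r / 4) + s * ((L * r) * tt)
      + r * (r / 4) + r * ((L * r) * tt) := by
    have huu_eq : uu = dlt - eps - alf - bet := by rw [hid]; abel
    have hsplit1 : r ^ 2 = uu ⬝ᵥ dlt - uu ⬝ᵥ eps - uu ⬝ᵥ alf - uu ⬝ᵥ bet := by
      rw [hrdef, sq_enorm]
      nth_rewrite 2 [huu_eq]
      simp only [dotProduct_sub]
    have hdot1 : uu ⬝ᵥ dlt = uu ⬝ᵥ ((1 - P).mulVec dlt) + uu ⬝ᵥ (P.mulVec dlt) := by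
      rw [hqsplit, dotProduct_sub]; ring
    have hPdlt : P.mulVec dlt - bet = P.mulVec (uu + eps + alf) := by
      conv_lhs => rw [hid]
      rw [Matrix.mulVec_add, hPbet]
      abel_nf
    have hdot2 : uu ⬝ᵥ (P.mulVec dlt) - uu ⬝ᵥ bet
        = (P.mulVec uu) ⬝ᵥ uu + (P.mulVec uu) ⬝ᵥ eps + (P.mulVec uu) ⬝ᵥ alf := by
      rw [← dotProduct_sub, hPdlt, ← dot_mulVec_symm hPsym, dotProduct_add, dotProduct_add]
    have hPuu : (P.mulVec uu) ⬝ᵥ uu = s ^ 2 := by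
      rw [hsdef, sq_enorm]
      calc (P.mulVec uu) ⬝ᵥ uu = uu ⬝ᵥ (P.mulVec uu) := dotProduct_comm _ _
        _ = uu ⬝ᵥ (P.mulVec (P.mulVec uu)) := by rw [mulVec_mulVec uu P P, hPP]
        _ = (P.mulVec uu) ⬝ᵥ (P.mulVec uu) := (dot_mulVec_symm hPsym uu (P.mulVec uu)).symm
    -- bounds
    have b1 : uu ⬝ᵥ ((1 - P).mulVec dlt) ≤ r * qq := by
      rw [hrdef, hqqdef]; exact dot_le_enorm_mul _ _
    have b2 : (P.mulVec uu) ⬝ᵥ eps ≤ s * (r / 4) := by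
      calc (P.mulVec uu) ⬝ᵥ eps ≤ enorm (P.mulVec uu) * enorm eps := dot_le_enorm_mul _ _
        _ ≤ s * (r / 4) := by
            rw [← hsdef]
            exact mul_le_mul_of_nonneg_left hEps hs0
    have b3 : (P.mulVec uu) ⬝ᵥ alf ≤ s * ((L * r) * tt) := by
      calc (P.mulVec uu) ⬝ᵥ alf ≤ enorm (P.mulVec uu) * enorm alf := dot_le_enorm_mul _ _
        _ ≤ s * ((L * r) * tt) := by
            rw [← hsdef]
            exact mul_le_mul_of_nonneg_left hAlf hs0
    have b4 : -(uu ⬝ᵥ eps) ≤ r * (r / 4) := by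
      calc -(uu ⬝ᵥ eps) ≤ enorm uu * enorm eps := neg_dot_le_enorm_mul _ _
        _ ≤ r * (r / 4) := by
            rw [← hrdef]
            exact mul_le_mul_of_nonneg_left hEps hr0
    have b5 : -(uu ⬝ᵥ alf) ≤ r * ((L * r) * tt) := by
      calc -(uu ⬝ᵥ alf) ≤ enorm uu * enorm alf := neg_dot_le_enorm_mul _ _
        _ ≤ r * ((L * r) * tt) := by
            rw [← hrdef]
            exact mul_le_mul_of_nonneg_left hAlf hr0
    have hcomb : r ^ 2 = uu ⬝ᵥ ((1 - P).mulVec dlt) + (P.mulVec uu) ⬝ᵥ uu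
        + (P.mulVec uu) ⬝ᵥ eps + (P.mulVec uu) ⬝ᵥ alf - uu ⬝ᵥ eps - uu ⬝ᵥ alf := by
      rw [hsplit1, hdot1]
      linarith [hdot2]
    rw [hcomb, hPuu]
    linarith
  -- arithmetic endgame
  have hLr : L * r ≤ 1 / 3 := by
    have := hxclose
    rw [hrm] at this
    have h3L : 0 < 3 * L := by linarith
    calc L * r ≤ L * (1 / (3 * L)) := mul_le_mul_of_nonneg_left this (le_of_lt hL)
      _ = 1 / 3 := by field_simp
  have hLp : L * pp ≤ 1 / 12 := by
    have h12L : 0 < 12 * L := by linarith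
    have hwc : pp ≤ 1 / (12 * L) := hwclose
    calc L * pp ≤ L * (1 / (12 * L)) := mul_le_mul_of_nonneg_left hwc (le_of_lt hL)
      _ = 1 / 12 := by field_simp
  -- derive tt ≤ (3/2) pp + (3/2) s + (3/8) r
  have hLrtt3 : (L * r) * tt ≤ (1/3) * tt := mul_le_mul_of_nonneg_right hLr ht0
  have hT2 : tt ≤ (3/2) * pp + (3/2) * s + (3/8) * r := by linarith [hT, hLrtt3]
  have hs6 : s ≤ r / 6 := by
    have h1 : (L * r) * r ≤ (1/3) * r := mul_le_mul_of_nonneg_right hLr hr0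
    have e : L * r ^ 2 / 2 = ((L * r) * r) / 2 := by ring
    linarith [hS, e.le, e.ge]
  have hLrt : (L * r) * tt ≤ r / 3 := by
    have h1 : (L * r) * tt ≤ (L * r) * ((3/2) * pp + (3/2) * s + (3/8) * r) :=
      mul_le_mul_of_nonneg_left hT2 hLr0
    have hexp : (L * r) * ((3/2) * pp + (3/2) * s + (3/8) * r)
        = (3/2) * ((L * r) * pp) + (3/2) * ((L * r) * s) + (3/8) * ((L * r) * r) := by ring
    have c1 : (L * r) * pp ≤ r * (1/12) := by
      have h := mul_le_mul_of_nonneg_left hLp hr0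
      calc (L * r) * pp = r * (L * pp) := by ring
        _ ≤ r * (1/12) := h
    have c2 : (L * r) * s ≤ (1/3) * (r/6) := by
      have h2 : (L * r) * s ≤ (1/3) * s := mul_le_mul_of_nonneg_right hLr hs0
      have h3 : (1/3 : ℝ) * s ≤ (1/3) * (r/6) := by linarith [hs6]
      linarith
    have c3 : (L * r) * r ≤ (1/3) * r := mul_le_mul_of_nonneg_right hLr hr0
    rw [hexp] at h1
    linarith
  -- combine
  have hfinal : (7:ℝ)/24 * r ^ 2 ≤ r * qq := by
    have hb1 : s ^ 2 ≤ (r/6) * (r/6) := by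
      have : s * s ≤ (r/6) * (r/6) :=
        mul_le_mul hs6 hs6 hs0 (by linarith)
      nlinarith [this]
    have hb2 : s * (r / 4) ≤ (r/6) * (r/4) :=
      mul_le_mul_of_nonneg_right hs6 (by linarith)
    have hb3 : s * ((L * r) * tt) ≤ (r/6) * (r/3) := by
      have h1 : s * ((L * r) * tt) ≤ s * (r/3) := mul_le_mul_of_nonneg_left hLrt hs0
      have h2 : s * (r/3) ≤ (r/6) * (r/3) := mul_le_mul_of_nonneg_right hs6 (by linarith)
      linarith
    have hb4 : r * ((L * r) * tt) ≤ r * (r/3) := mul_le_mul_of_nonneg_left hLrt hr0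
    have e1 : (r/6) * (r/6) = r^2/36 := by ring
    have e2 : (r/6) * (r/4) = r^2/24 := by ring
    have e3 : (r/6) * (r/3) = r^2/18 := by ring
    have e4 : r * (r/3) = r^2/3 := by ring
    have e5 : r * (r/4) = r^2/4 := by ring
    nlinarith [hMAIN, hb1, hb2, hb3, hb4]
  rw [hrm]
  rcases eq_or_lt_of_le hr0 with h0 | hpos
  · rw [← h0]
    linarith
  · have e : (7:ℝ)/24 * r ^ 2 = r * ((7/24) * r) := by ring
    rw [e] at hfinal
    have h7 : (7:ℝ)/24 * r ≤ qq := le_of_mul_le_mul_left hfinal hpos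
    linarith

end ConstrainedCurvature
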